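/- arXiv:1401.7714 — 3 statements merged into one kernel-verified Lean document; each statement's English description precedes it below -/
import Mathlib

section
/- Let S be a finite subset of ℤ×ℤ×ℤ and v : S → ℝ. If P and P' both maximize Ψ_v over 𝒟(S), then P and P' have the same marginals: P_ℓ = P'_ℓ for each ℓ ∈ {1,2,3}. -/
open Finset

/-- The three coordinate functions of `ℤ × ℤ × ℤ`. -/
def coord (ℓ : Fin 3) (s : ℤ × ℤ × ℤ) : ℤ := ![s.1, s.2.1, s.2.2] ℓ

/-- The `ℓ`-th marginal of a function `f` on `S`, evaluated at `a`. -/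
def marg (S : Finset (ℤ × ℤ × ℤ)) (f : ↥S → ℝ) (ℓ : Fin 3) (a : ℤ) : ℝ :=
  ∑ s ∈ Finset.univ.filter (fun s : ↥S => coord ℓ s.val = a), f s

/-- `P` is a probability distribution on `S`. -/
def IsDist (S : Finset (ℤ × ℤ × ℤ)) (P : ↥S → ℝ) : Prop :=
  (∀ s, 0 ≤ P s) ∧ ∑ s, P s = 1

/-- Shannon entropy of `P` (with the convention `0 * log 0 = 0`). -/
noncomputable def entH (S : Finset (ℤ × ℤ × ℤ)) (P : ↥S → ℝ) : ℝ :=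
  -∑ s, P s * Real.log (P s)

/-- Two distributions on `S` are compatible if they have the same marginals. -/
def Compatible (S : Finset (ℤ × ℤ × ℤ)) (P Q : ↥S → ℝ) : Prop :=
  ∀ ℓ : Fin 3, ∀ a : ℤ, marg S P ℓ a = marg S Q ℓ a

/-- `Γ_S(P) = max{H(Q) : Q ∈ 𝒟(S) compatible with P} − H(P)`. -/
noncomputable def Gamma (S : Finset (ℤ × ℤ × ℤ)) (P : ↥S → ℝ) : ℝ :=
  sSup {x : ℝ | ∃ Q : ↥S → ℝ, IsDist S Q ∧ Compatible S P Q ∧ x = entH S Q} - entH S P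

/-- Entropy of the `ℓ`-th marginal of `P`. -/
noncomputable def margEntH (S : Finset (ℤ × ℤ × ℤ)) (P : ↥S → ℝ) (ℓ : Fin 3) : ℝ :=
  -∑ a ∈ S.image (coord ℓ), marg S P ℓ a * Real.log (marg S P ℓ a)

/-- `Ψ_v(P) = Σ_ℓ H(P_ℓ)/3 + Σ_s P(s) v(s)`. -/
noncomputable def Psi (S : Finset (ℤ × ℤ × ℤ)) (v : ↥S → ℝ) (P : ↥S → ℝ) : ℝ :=
  (∑ ℓ : Fin 3, margEntH S P ℓ) / 3 + ∑ s, P s * v s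

/-- any two maximizers of `Ψ_v` over `𝒟(S)` have the same marginals. -/
theorem stmt6 (S : Finset (ℤ × ℤ × ℤ)) (v : ↥S → ℝ) (P P' : ↥S → ℝ)
    (hP : IsDist S P) (hP' : IsDist S P')
    (hmax : ∀ Q : ↥S → ℝ, IsDist S Q → Psi S v Q ≤ Psi S v P)
    (hmax' : ∀ Q : ↥S → ℝ, IsDist S Q → Psi S v Q ≤ Psi S v P') :
    ∀ ℓ : Fin 3, ∀ a : ℤ, marg S P ℓ a = marg S P' ℓ a := by
  classical
  set M : ↥S → ℝ := fun s => (P s + P' s) / 2 with hMdef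
  have hMnn : ∀ s, 0 ≤ M s := fun s => by
    have h1 := hP.1 s; have h2 := hP'.1 s; simp only [hMdef]; linarith
  have hMsum : ∑ s, M s = 1 := by
    simp only [hMdef]
    rw [← Finset.sum_div, Finset.sum_add_distrib, hP.2, hP'.2]; norm_num
  have hM : IsDist S M := ⟨hMnn, hMsum⟩
  have hnnP : ∀ ℓ a, 0 ≤ marg S P ℓ a := fun ℓ a => Finset.sum_nonneg fun s _ => hP.1 s
  have hnnP' : ∀ ℓ a, 0 ≤ marg S P' ℓ a := fun ℓ a => Finset.sum_nonneg fun s _ => hP'.1 s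
  have hmargM : ∀ ℓ a, marg S M ℓ a = (marg S P ℓ a + marg S P' ℓ a) / 2 := by
    intro ℓ a
    simp only [marg, hMdef]
    rw [← Finset.sum_div, Finset.sum_add_distrib]
  -- the concavity gap
  set g : Fin 3 → ℤ → ℝ := fun ℓ a =>
    Real.negMulLog (marg S M ℓ a)
      - (Real.negMulLog (marg S P ℓ a) + Real.negMulLog (marg S P' ℓ a)) / 2 with hgdef
  have hgnn : ∀ ℓ a, 0 ≤ g ℓ a := by
    intro ℓ a
    simp only [hgdef, hmargM, sub_nonneg]
    rcases eq_or_ne (marg S P ℓ a) (marg S P' ℓ a) with h | h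
    · rw [h]
      have : (marg S P' ℓ a + marg S P' ℓ a) / 2 = marg S P' ℓ a := by ring
      rw [this]; linarith
    · have hs := Real.strictConcaveOn_negMulLog.2 (Set.mem_Ici.mpr (hnnP ℓ a))
        (Set.mem_Ici.mpr (hnnP' ℓ a)) h (by norm_num : (0:ℝ) < 1/2)
        (by norm_num : (0:ℝ) < 1/2) (by norm_num)
      simp only [smul_eq_mul] at hs
      have heq : (1/2 : ℝ) * marg S P ℓ a + (1/2 : ℝ) * marg S P' ℓ a
          = (marg S P ℓ a + marg S P' ℓ a) / 2 := by ring
      rw [heq] at hs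
      linarith
  have hent : ∀ (Q : ↥S → ℝ) (ℓ : Fin 3),
      margEntH S Q ℓ = ∑ a ∈ S.image (coord ℓ), Real.negMulLog (marg S Q ℓ a) := by
    intro Q ℓ
    simp only [margEntH, Real.negMulLog, neg_mul, Finset.sum_neg_distrib]
  have hlin : ∑ s, M s * v s = (∑ s, P s * v s + ∑ s, P' s * v s) / 2 := by
    have hpt : ∀ s : ↥S, M s * v s = P s * v s / 2 + P' s * v s / 2 := by
      intro s; simp only [hMdef]; ring
    rw [Finset.sum_congr rfl fun s _ => hpt s, Finset.sum_add_distrib,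
      ← Finset.sum_div, ← Finset.sum_div]
    ring
  have hPsieq : Psi S v P = Psi S v P' := le_antisymm (hmax' P hP) (hmax P' hP')
  have hsumg : ∑ ℓ : Fin 3, ∑ a ∈ S.image (coord ℓ), g ℓ a
      = 3 * Psi S v M - 3 * (Psi S v P + Psi S v P') / 2 := by
    have hA : ∀ ℓ : Fin 3, ∑ a ∈ S.image (coord ℓ), g ℓ a
        = margEntH S M ℓ - (margEntH S P ℓ + margEntH S P' ℓ) / 2 := by
      intro ℓ
      rw [hent M ℓ, hent P ℓ, hent P' ℓ]
      simp only [hgdef]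
      rw [Finset.sum_sub_distrib, ← Finset.sum_div, Finset.sum_add_distrib]
    rw [Finset.sum_congr rfl fun ℓ _ => hA ℓ, Finset.sum_sub_distrib,
      ← Finset.sum_div, Finset.sum_add_distrib]
    simp only [Psi]
    rw [hlin]
    ring
  have hle : ∑ ℓ : Fin 3, ∑ a ∈ S.image (coord ℓ), g ℓ a ≤ 0 := by
    rw [hsumg]
    have := hmax M hM
    linarith
  have hzero : ∑ ℓ : Fin 3, ∑ a ∈ S.image (coord ℓ), g ℓ a = 0 :=
    le_antisymm hle (Finset.sum_nonneg fun ℓ _ => Finset.sum_nonneg fun a _ => hgnn ℓ a)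
  have hall : ∀ ℓ : Fin 3, ∀ a ∈ S.image (coord ℓ), g ℓ a = 0 := by
    intro ℓ a ha
    have h1 := (Finset.sum_eq_zero_iff_of_nonneg
      (fun ℓ _ => Finset.sum_nonneg fun a _ => hgnn ℓ a)).mp hzero ℓ (Finset.mem_univ ℓ)
    exact (Finset.sum_eq_zero_iff_of_nonneg (fun a _ => hgnn ℓ a)).mp h1 a ha
  intro ℓ a
  by_cases ha : a ∈ S.image (coord ℓ)
  · by_contra hne
    have hs := Real.strictConcaveOn_negMulLog.2 (Set.mem_Ici.mpr (hnnP ℓ a))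
      (Set.mem_Ici.mpr (hnnP' ℓ a)) hne (by norm_num : (0:ℝ) < 1/2)
      (by norm_num : (0:ℝ) < 1/2) (by norm_num)
    simp only [smul_eq_mul] at hs
    have heq : (1/2 : ℝ) * marg S P ℓ a + (1/2 : ℝ) * marg S P' ℓ a
        = (marg S P ℓ a + marg S P' ℓ a) / 2 := by ring
    rw [heq] at hs
    have h0 := hall ℓ a ha
    simp only [hgdef, hmargM] at h0
    linarith
  · have hempty : ∀ (Q : ↥S → ℝ), marg S Q ℓ a = 0 := by
      intro Q
      apply Finset.sum_eq_zero
      intro s hs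
      exfalso
      rw [Finset.mem_filter] at hs
      exact ha (Finset.mem_image.mpr ⟨s.val, s.prop, hs.2⟩)
    rw [hempty P, hempty P']
end

section
/- Let S be a finite subset of ℤ×ℤ×ℤ. For any δ > 0 there exists N₀ such that for every integer N ≥ N₀, every ℓ ∈ {1,2,3}, and every pair of compatible 1/N-valued distributions P, Q ∈ 𝒟(S), one has |(H(Q) − H(P_ℓ)) − (1/N)·log(Φ'_{ℓ,N}(P,Q))| ≤ δ, where Φ'_{ℓ,N}(P,Q) = Π_{a∈α_ℓ(S)} [ (N·P_ℓ(a))! / Π_{s∈S, α_ℓ(s)=a} (N·Q(s))! ]. -/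
open Finset

/-- The `ℓ`-th marginal of an integer-valued weight function `n` on `S`. -/
def margN (S : Finset (ℤ × ℤ × ℤ)) (n : ↥S → ℕ) (ℓ : Fin 3) (a : ℤ) : ℕ :=
  ∑ s ∈ Finset.univ.filter (fun s : ↥S => coord ℓ s.val = a), n s

open Filter Asymptotics

-- === auxiliary lemmas ===

lemma mul_log_ratio_le_one (n : ℕ) : (n:ℝ) * (Real.log (n+1) - Real.log n) ≤ 1 := by
  rcases Nat.eq_zero_or_pos n with h | h
  · simp [h]
  · have hn : (0:ℝ) < n := by exact_mod_cast h
    have h1 : Real.log (n+1) - Real.log n = Real.log ((n+1)/n) := by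
      rw [Real.log_div (by positivity) (ne_of_gt hn)]
    rw [h1]
    have h2 : Real.log ((n+1)/n) ≤ (n+1)/n - 1 := Real.log_le_sub_one_of_pos (by positivity)
    have h3 : ((n:ℝ)+1)/n - 1 = 1/n := by field_simp; ring
    calc (n:ℝ) * Real.log ((n+1)/n) ≤ n * (1/n) := by
          rw [← h3]; exact mul_le_mul_of_nonneg_left h2 hn.le
      _ = 1 := by field_simp

lemma one_le_succ_mul_log (n : ℕ) : 1 ≤ ((n:ℝ)+2) * (Real.log (n+2) - Real.log (n+1)) := by
  have h1 : Real.log ((n+1)/(n+2)) ≤ ((n:ℝ)+1)/(n+2) - 1 :=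
    Real.log_le_sub_one_of_pos (by positivity)
  have h2 : Real.log (((n:ℝ)+1)/(n+2)) = Real.log (n+1) - Real.log (n+2) := by
    rw [Real.log_div (by positivity) (by positivity)]
  have h3 : ((n:ℝ)+1)/(n+2) - 1 = -(1/(n+2)) := by field_simp; ring
  rw [h2, h3] at h1
  have h4 : 1/((n:ℝ)+2) ≤ Real.log (n+2) - Real.log (n+1) := by linarith
  calc (1:ℝ) = ((n:ℝ)+2) * (1/(n+2)) := by field_simp
    _ ≤ ((n:ℝ)+2) * (Real.log (n+2) - Real.log (n+1)) :=
        mul_le_mul_of_nonneg_left h4 (by positivity)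

lemma stirling_lower : ∀ n : ℕ, (n:ℝ) * Real.log n - n ≤ Real.log (n.factorial) := by
  intro n
  induction n with
  | zero => simp
  | succ k ih =>
    have hfac : Real.log ((k+1).factorial) = Real.log (k+1) + Real.log (k.factorial) := by
      rw [Nat.factorial_succ]
      push_cast
      rw [Real.log_mul (by positivity) (by exact_mod_cast (Nat.factorial_pos k).ne')]
    rw [hfac]
    push_cast
    have h1 := mul_log_ratio_le_one k
    nlinarith [ih]

lemma stirling_upper : ∀ n : ℕ, Real.log (n.factorial) ≤ ((n:ℝ)+1) * Real.log (n+1) - n := by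
  intro n
  induction n with
  | zero => simp
  | succ k ih =>
    have hfac : Real.log ((k+1).factorial) = Real.log (k+1) + Real.log (k.factorial) := by
      rw [Nat.factorial_succ]
      push_cast
      rw [Real.log_mul (by positivity) (by exact_mod_cast (Nat.factorial_pos k).ne')]
    rw [hfac]
    push_cast
    have h1 := one_le_succ_mul_log k
    have e : ((k:ℝ)+1+1) = (k:ℝ)+2 := by ring
    rw [e]
    nlinarith [ih]

lemma stirling_abs (n : ℕ) :
    |Real.log (n.factorial) - ((n:ℝ) * Real.log n - n)| ≤ Real.log (n+1) + 1 := by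
  have h1 := stirling_lower n
  have h2 := stirling_upper n
  have h3 := mul_log_ratio_le_one n
  have h4 : (0:ℝ) ≤ Real.log (n+1) := Real.log_nonneg (by push_cast; linarith)
  rw [abs_le]
  constructor <;> nlinarith

lemma exists_N0 (C δ : ℝ) (hδ : 0 < δ) :
    ∃ N₀ : ℕ, 1 ≤ N₀ ∧ ∀ N : ℕ, N₀ ≤ N → C * (Real.log (N+1) + 1) / N ≤ δ := by
  have hlog : (fun x : ℝ => Real.log (x+1)) =o[atTop] (fun x : ℝ => x + 1) :=
    Real.isLittleO_log_id_atTop.comp_tendsto (tendsto_atTop_add_const_right atTop 1 tendsto_id)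
  have hx1 : (fun x : ℝ => x + 1) =O[atTop] (fun x : ℝ => x) := by
    apply IsBigO.of_bound 2
    filter_upwards [eventually_ge_atTop (1:ℝ)] with x hx
    rw [Real.norm_eq_abs, Real.norm_eq_abs, abs_of_nonneg (by linarith), abs_of_nonneg (by linarith)]
    linarith
  have h1 : (fun x : ℝ => C * (Real.log (x+1) + 1)) =o[atTop] (fun x : ℝ => x) := by
    have := (hlog.trans_isBigO hx1).add (isLittleO_const_id_atTop (1:ℝ))
    exact this.const_mul_left C
  have h2 : Tendsto (fun x : ℝ => C * (Real.log (x+1) + 1) / x) atTop (nhds 0) :=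
    h1.tendsto_div_nhds_zero
  have h3 : Tendsto (fun N : ℕ => C * (Real.log ((N:ℝ)+1) + 1) / N) atTop (nhds 0) :=
    h2.comp tendsto_natCast_atTop_atTop
  have h4 := h3.eventually_lt_const hδ
  rw [eventually_atTop] at h4
  obtain ⟨M, hM⟩ := h4
  exact ⟨max M 1, le_max_right _ _, fun N hN => (hM N (le_trans (le_max_left _ _) hN)).le⟩

lemma div_log_div (k : ℕ) (N : ℝ) (hN : 0 < N) :
    ((k:ℝ)/N) * Real.log ((k:ℝ)/N) = ((k:ℝ) * Real.log k)/N - ((k:ℝ)/N) * Real.log N := by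
  rcases Nat.eq_zero_or_pos k with h | h
  · simp [h]
  · have hk : (0:ℝ) < k := by exact_mod_cast h
    rw [Real.log_div hk.ne' hN.ne']
    ring

/-- Lemma A.2, second part: for any `δ > 0` and all `N` large enough,
`|(H(Q) − H(P_ℓ)) − (1/N) log Φ'_{ℓ,N}(P,Q)| ≤ δ` for all compatible `1/N`-valued
distributions `P, Q ∈ 𝒟(S)`, where
`Φ'_{ℓ,N}(P,Q) = Π_{a ∈ α_ℓ(S)} (N·P_ℓ(a))! / Π_{s : α_ℓ(s)=a} (N·Q(s))!`. -/
theorem stmt11 (S : Finset (ℤ × ℤ × ℤ)) :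
    ∀ δ : ℝ, 0 < δ → ∃ N₀ : ℕ, ∀ N : ℕ, N₀ ≤ N → ∀ ℓ : Fin 3,
      ∀ P Q : ↥S → ℝ, ∀ n m : ↥S → ℕ,
        IsDist S P → IsDist S Q →
        (∀ s, P s = (n s : ℝ) / N) → (∀ s, Q s = (m s : ℝ) / N) →
        Compatible S P Q →
        |(entH S Q - margEntH S P ℓ) -
            (1 / (N : ℝ)) * Real.log (∏ a ∈ S.image (coord ℓ),
              (((margN S n ℓ a).factorial : ℝ) /
                ∏ s ∈ Finset.univ.filter (fun s : ↥S => coord ℓ s.val = a),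
                  ((m s).factorial : ℝ)))| ≤ δ := by
  intro δ hδ
  obtain ⟨N₀, hN₀1, hN₀⟩ := exists_N0 (2 * S.card) δ hδ
  refine ⟨N₀, fun N hN ℓ P Q n m hP hQ hPn hQm hcomp => ?_⟩
  have hN1 : 1 ≤ N := le_trans hN₀1 hN
  have hNR : (0:ℝ) < N := by exact_mod_cast hN1
  set A := S.image (coord ℓ) with hA
  set T := fun a : ℤ => Finset.univ.filter (fun s : ↥S => coord ℓ s.val = a) with hT
  -- fiberwise decomposition
  have hfibR : ∀ g : ↥S → ℝ, ∑ a ∈ A, ∑ s ∈ T a, g s = ∑ s, g s :=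
    fun g => Finset.sum_fiberwise_of_maps_to (fun s _ => Finset.mem_image_of_mem _ s.2) g
  have hfibN : ∀ g : ↥S → ℕ, ∑ a ∈ A, ∑ s ∈ T a, g s = ∑ s, g s :=
    fun g => Finset.sum_fiberwise_of_maps_to (fun s _ => Finset.mem_image_of_mem _ s.2) g
  -- sums of weights
  have hQsum : ∑ s, (m s : ℝ) = N := by
    have h := hQ.2
    have h2 : ∑ s, Q s = (∑ s, (m s:ℝ)) / N := by
      rw [Finset.sum_div]; exact Finset.sum_congr rfl (fun s _ => hQm s)
    rw [h2, div_eq_one_iff_eq hNR.ne'] at h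
    exact h
  have hPsum : ∑ s, (n s : ℝ) = N := by
    have h := hP.2
    have h2 : ∑ s, P s = (∑ s, (n s:ℝ)) / N := by
      rw [Finset.sum_div]; exact Finset.sum_congr rfl (fun s _ => hPn s)
    rw [h2, div_eq_one_iff_eq hNR.ne'] at h
    exact h
  have hmN : ∑ s, m s = N := by exact_mod_cast hQsum
  have hnN : ∑ s, n s = N := by exact_mod_cast hPsum
  -- margN as fiber sum
  have hmargNdef : ∀ a, margN S n ℓ a = ∑ s ∈ T a, n s := fun a => rfl
  -- compatibility on fibers
  have hkm : ∀ a, ∑ s ∈ T a, m s = margN S n ℓ a := by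
    intro a
    have h := hcomp ℓ a
    unfold marg at h
    have hPr : ∑ s ∈ T a, P s = (∑ s ∈ T a, (n s:ℝ))/N := by
      rw [Finset.sum_div]; exact Finset.sum_congr rfl (fun s _ => hPn s)
    have hQr : ∑ s ∈ T a, Q s = (∑ s ∈ T a, (m s:ℝ))/N := by
      rw [Finset.sum_div]; exact Finset.sum_congr rfl (fun s _ => hQm s)
    rw [hPr, hQr, div_eq_div_iff hNR.ne' hNR.ne'] at h
    have h2 : (∑ s ∈ T a, (m s:ℝ)) = ∑ s ∈ T a, (n s:ℝ) := by
      have := mul_right_cancel₀ hNR.ne' h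
      linarith [this]
    have h3 : ∑ s ∈ T a, m s = ∑ s ∈ T a, n s := by exact_mod_cast h2
    rw [h3, hmargNdef]
  -- total of marginals
  have hksum : ∑ a ∈ A, margN S n ℓ a = N := by
    have : ∑ a ∈ A, margN S n ℓ a = ∑ s, n s := by
      rw [Finset.sum_congr rfl (fun a _ => hmargNdef a)]; exact hfibN n
    rw [this, hnN]
  have hksumR : ∑ a ∈ A, ((margN S n ℓ a : ℕ) : ℝ) = N := by exact_mod_cast hksum
  -- marginal of P
  have hmargP : ∀ a, marg S P ℓ a = ((margN S n ℓ a : ℕ) : ℝ)/N := by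
    intro a
    unfold marg
    rw [hmargNdef]
    push_cast
    rw [Finset.sum_div]
    exact Finset.sum_congr rfl (fun s _ => hPn s)
  -- entropy rewrites
  have hent : entH S Q = Real.log N - (1/N) * ∑ s, (m s:ℝ) * Real.log (m s) := by
    unfold entH
    have e1 : ∀ s : ↥S, Q s * Real.log (Q s)
        = ((m s:ℝ) * Real.log (m s))/N - ((m s:ℝ)/N) * Real.log N := by
      intro s; rw [hQm s]; exact div_log_div (m s) N hNR
    rw [Finset.sum_congr rfl (fun s _ => e1 s), Finset.sum_sub_distrib,
      ← Finset.sum_div, ← Finset.sum_mul, ← Finset.sum_div, hQsum, div_self hNR.ne']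
    field_simp
    ring
  have hmargent : margEntH S P ℓ
      = Real.log N - (1/N) * ∑ a ∈ A, ((margN S n ℓ a : ℕ):ℝ) * Real.log (margN S n ℓ a) := by
    unfold margEntH
    have e1 : ∀ a ∈ A, marg S P ℓ a * Real.log (marg S P ℓ a)
        = (((margN S n ℓ a:ℕ):ℝ) * Real.log (margN S n ℓ a))/N
          - (((margN S n ℓ a:ℕ):ℝ)/N) * Real.log N := by
      intro a _; rw [hmargP a]; exact div_log_div _ N hNR
    rw [Finset.sum_congr rfl e1, Finset.sum_sub_distrib,
      ← Finset.sum_div, ← Finset.sum_mul, ← Finset.sum_div, hksumR, div_self hNR.ne']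
    field_simp
    ring
  -- log of the product
  have hfacne : ∀ a ∈ A, (((margN S n ℓ a).factorial : ℝ) / ∏ s ∈ T a, ((m s).factorial : ℝ)) ≠ 0 := by
    intro a _
    apply div_ne_zero
    · exact_mod_cast (Nat.factorial_pos _).ne'
    · exact Finset.prod_ne_zero_iff.mpr (fun s _ => by exact_mod_cast (Nat.factorial_pos _).ne')
  have hlogprod : Real.log (∏ a ∈ A, (((margN S n ℓ a).factorial : ℝ) / ∏ s ∈ T a, ((m s).factorial : ℝ)))
      = ∑ a ∈ A, Real.log ((margN S n ℓ a).factorial) - ∑ s, Real.log ((m s).factorial) := by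
    rw [Real.log_prod hfacne]
    have e1 : ∀ a ∈ A, Real.log (((margN S n ℓ a).factorial : ℝ) / ∏ s ∈ T a, ((m s).factorial : ℝ))
        = Real.log ((margN S n ℓ a).factorial) - ∑ s ∈ T a, Real.log ((m s).factorial) := by
      intro a _
      rw [Real.log_div (by exact_mod_cast (Nat.factorial_pos _).ne')
        (Finset.prod_ne_zero_iff.mpr (fun s _ => by exact_mod_cast (Nat.factorial_pos _).ne')),
        Real.log_prod (fun s _ => by exact_mod_cast (Nat.factorial_pos _).ne')]
    rw [Finset.sum_congr rfl e1, Finset.sum_sub_distrib,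
      hfibR (fun s => Real.log ((m s).factorial))]
  -- error terms
  set E : ℤ → ℝ := fun a => Real.log ((margN S n ℓ a).factorial)
    - (((margN S n ℓ a:ℕ):ℝ) * Real.log (margN S n ℓ a) - (margN S n ℓ a:ℕ)) with hE
  set F : ↥S → ℝ := fun s => Real.log ((m s).factorial)
    - ((m s:ℝ) * Real.log (m s) - (m s:ℝ)) with hF
  have hmain : (entH S Q - margEntH S P ℓ) -
      (1 / (N : ℝ)) * Real.log (∏ a ∈ A,
        (((margN S n ℓ a).factorial : ℝ) / ∏ s ∈ T a, ((m s).factorial : ℝ)))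
      = (1/N) * ((∑ s, F s) - ∑ a ∈ A, E a) := by
    rw [hent, hmargent, hlogprod]
    have e1 : ∑ s, F s = (∑ s, Real.log ((m s).factorial))
        - (∑ s, (m s:ℝ) * Real.log (m s)) + (∑ s, (m s:ℝ)) := by
      rw [hF]; rw [Finset.sum_sub_distrib, Finset.sum_sub_distrib]; ring
    have e2 : ∑ a ∈ A, E a = (∑ a ∈ A, Real.log ((margN S n ℓ a).factorial))
        - (∑ a ∈ A, ((margN S n ℓ a:ℕ):ℝ) * Real.log (margN S n ℓ a)) + (∑ a ∈ A, ((margN S n ℓ a:ℕ):ℝ)) := by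
      rw [hE]; rw [Finset.sum_sub_distrib, Finset.sum_sub_distrib]; ring
    rw [e1, e2, hQsum, hksumR]
    ring
  rw [hmain]
  -- bounds on individual errors
  have hc : (0:ℝ) ≤ Real.log (N+1) + 1 := by
    have := Real.log_nonneg (show (1:ℝ) ≤ (N:ℝ)+1 by linarith)
    linarith
  have hFb : ∀ s : ↥S, |F s| ≤ Real.log (N+1) + 1 := by
    intro s
    have h1 := stirling_abs (m s)
    have h2 : (m s : ℝ) + 1 ≤ (N:ℝ) + 1 := by
      have : m s ≤ N := by
        calc m s ≤ ∑ t, m t := Finset.single_le_sum (fun t _ => Nat.zero_le _) (mem_univ s)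
          _ = N := hmN
      exact_mod_cast Nat.succ_le_succ this
    have h3 : Real.log ((m s:ℝ)+1) ≤ Real.log ((N:ℝ)+1) :=
      Real.log_le_log (by positivity) h2
    calc |F s| ≤ Real.log ((m s:ℝ)+1) + 1 := h1
      _ ≤ Real.log ((N:ℝ)+1) + 1 := by linarith
  have hEb : ∀ a ∈ A, |E a| ≤ Real.log (N+1) + 1 := by
    intro a ha
    have h1 := stirling_abs (margN S n ℓ a)
    have h2 : ((margN S n ℓ a:ℕ) : ℝ) + 1 ≤ (N:ℝ) + 1 := by
      have : margN S n ℓ a ≤ N := by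
        calc margN S n ℓ a ≤ ∑ b ∈ A, margN S n ℓ b :=
            Finset.single_le_sum (fun b _ => Nat.zero_le _) ha
          _ = N := hksum
      exact_mod_cast Nat.succ_le_succ this
    have h3 : Real.log (((margN S n ℓ a:ℕ):ℝ)+1) ≤ Real.log ((N:ℝ)+1) :=
      Real.log_le_log (by positivity) h2
    calc |E a| ≤ Real.log (((margN S n ℓ a:ℕ):ℝ)+1) + 1 := h1
      _ ≤ Real.log ((N:ℝ)+1) + 1 := by linarith
  -- sum the bounds
  have hFsum : |∑ s, F s| ≤ (S.card : ℝ) * (Real.log (N+1) + 1) := by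
    calc |∑ s, F s| ≤ ∑ s, |F s| := Finset.abs_sum_le_sum_abs _ _
      _ ≤ ∑ _s : ↥S, (Real.log (N+1) + 1) := Finset.sum_le_sum (fun s _ => hFb s)
      _ = (Fintype.card ↥S : ℝ) * (Real.log (N+1) + 1) := by
          rw [Finset.sum_const, nsmul_eq_mul, Finset.card_univ]
      _ = (S.card : ℝ) * (Real.log (N+1) + 1) := by rw [Fintype.card_coe]
  have hEsum : |∑ a ∈ A, E a| ≤ (S.card : ℝ) * (Real.log (N+1) + 1) := by
    calc |∑ a ∈ A, E a| ≤ ∑ a ∈ A, |E a| := Finset.abs_sum_le_sum_abs _ _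
      _ ≤ ∑ _a ∈ A, (Real.log (N+1) + 1) := Finset.sum_le_sum hEb
      _ = (A.card : ℝ) * (Real.log (N+1) + 1) := by rw [Finset.sum_const, nsmul_eq_mul]
      _ ≤ (S.card : ℝ) * (Real.log (N+1) + 1) := by
          have : A.card ≤ S.card := Finset.card_image_le
          exact mul_le_mul_of_nonneg_right (by exact_mod_cast this) hc
  have hfinal := hN₀ N hN
  calc |(1/(N:ℝ)) * ((∑ s, F s) - ∑ a ∈ A, E a)|
      = (1/(N:ℝ)) * |(∑ s, F s) - ∑ a ∈ A, E a| := by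
        rw [abs_mul, abs_of_pos (by positivity : (0:ℝ) < 1/(N:ℝ))]
    _ ≤ (1/(N:ℝ)) * (2 * S.card * (Real.log (N+1) + 1)) := by
        apply mul_le_mul_of_nonneg_left _ (by positivity)
        calc |(∑ s, F s) - ∑ a ∈ A, E a| ≤ |∑ s, F s| + |∑ a ∈ A, E a| := abs_sub _ _
          _ ≤ 2 * S.card * (Real.log (N+1) + 1) := by linarith
    _ = 2 * S.card * (Real.log (N+1) + 1) / N := by ring
    _ ≤ δ := hfinal
end

section
/- Let S be a finite subset of ℤ×ℤ×ℤ and v : S → ℝ. Suppose P and P' both maximize Ψ_v over 𝒟(S), let Q̂ be the unique maximizer of H over the distributions in 𝒟(S) compatible with P, and let Q̂' be the unique maximizer of H over the distributions in 𝒟(S) compatible with P'. Then Q̂ = Q̂'; in particular the value Ψ_v(Q̂) does not depend on which maximizer of Ψ_v was chosen. -/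
open Finset

/- ### Auxiliary lemmas -/

noncomputable def phi (x : ℝ) : ℝ := x * Real.log x

lemma phi_mid_lt {x y : ℝ} (hx : 0 ≤ x) (hy : 0 ≤ y) (hne : x ≠ y) :
    phi ((x + y) / 2) < (phi x + phi y) / 2 := by
  have := Real.strictConvexOn_mul_log.2 (Set.mem_Ici.2 hx) (Set.mem_Ici.2 hy) hne
    (by norm_num : (0:ℝ) < 1/2) (by norm_num : (0:ℝ) < 1/2) (by norm_num)
  simp only [smul_eq_mul] at this
  have h1 : (1/2:ℝ) * x + (1/2) * y = (x + y) / 2 := by ring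
  rw [h1] at this
  unfold phi
  linarith

lemma phi_mid_le {x y : ℝ} (hx : 0 ≤ x) (hy : 0 ≤ y) :
    phi ((x + y) / 2) ≤ (phi x + phi y) / 2 := by
  rcases eq_or_ne x y with rfl | h
  · rw [add_self_div_two, add_self_div_two]
  · exact (phi_mid_lt hx hy h).le

lemma eq_of_phi_mid_eq {x y : ℝ} (hx : 0 ≤ x) (hy : 0 ≤ y)
    (h : phi ((x + y) / 2) = (phi x + phi y) / 2) : x = y := by
  by_contra hne
  exact absurd h (ne_of_lt (phi_mid_lt hx hy hne))

lemma sum_phi_mid_le {ι : Type*} (t : Finset ι) {x y : ι → ℝ}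
    (hx : ∀ i ∈ t, 0 ≤ x i) (hy : ∀ i ∈ t, 0 ≤ y i) :
    ∑ i ∈ t, phi ((x i + y i) / 2) ≤ ∑ i ∈ t, (phi (x i) + phi (y i)) / 2 :=
  Finset.sum_le_sum fun i hi => phi_mid_le (hx i hi) (hy i hi)

lemma sum_phi_mid_eq {ι : Type*} (t : Finset ι) {x y : ι → ℝ}
    (hx : ∀ i ∈ t, 0 ≤ x i) (hy : ∀ i ∈ t, 0 ≤ y i)
    (h : ∑ i ∈ t, phi ((x i + y i) / 2) = ∑ i ∈ t, (phi (x i) + phi (y i)) / 2) :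
    ∀ i ∈ t, x i = y i := fun i hi =>
  eq_of_phi_mid_eq (hx i hi) (hy i hi)
    (((Finset.sum_eq_sum_iff_of_le fun j hj => phi_mid_le (hx j hj) (hy j hj)).1 h) i hi)

lemma marg_nonneg {S : Finset (ℤ × ℤ × ℤ)} {f : ↥S → ℝ} (hf : ∀ s, 0 ≤ f s)
    (ℓ : Fin 3) (a : ℤ) : 0 ≤ marg S f ℓ a :=
  Finset.sum_nonneg fun s _ => hf s

lemma marg_mid (S : Finset (ℤ × ℤ × ℤ)) (f g : ↥S → ℝ) (ℓ : Fin 3) (a : ℤ) :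
    marg S (fun s => (f s + g s) / 2) ℓ a = (marg S f ℓ a + marg S g ℓ a) / 2 := by
  unfold marg
  rw [← Finset.sum_add_distrib, ← Finset.sum_div]

lemma mid_isDist {S : Finset (ℤ × ℤ × ℤ)} {f g : ↥S → ℝ}
    (hf : IsDist S f) (hg : IsDist S g) : IsDist S (fun s => (f s + g s) / 2) := by
  constructor
  · intro s
    have := hf.1 s; have := hg.1 s; positivity
  · rw [← Finset.sum_div, Finset.sum_add_distrib, hf.2, hg.2]; norm_num

/-- The midpoint of two distributions has each marginal-entropy at least the average,
with equality (summed) forcing equal marginals. -/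
lemma margEntH_mid_ge {S : Finset (ℤ × ℤ × ℤ)} {f g : ↥S → ℝ}
    (hf : ∀ s, 0 ≤ f s) (hg : ∀ s, 0 ≤ g s) (ℓ : Fin 3) :
    (margEntH S f ℓ + margEntH S g ℓ) / 2 ≤ margEntH S (fun s => (f s + g s) / 2) ℓ := by
  unfold margEntH
  have h := sum_phi_mid_le (S.image (coord ℓ))
    (x := fun a => marg S f ℓ a) (y := fun a => marg S g ℓ a)
    (fun a _ => marg_nonneg hf ℓ a) (fun a _ => marg_nonneg hg ℓ a)
  have h4 : ∑ b ∈ S.image (coord ℓ), (phi (marg S f ℓ b) + phi (marg S g ℓ b)) / 2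
      = ((∑ b ∈ S.image (coord ℓ), phi (marg S f ℓ b))
          + ∑ b ∈ S.image (coord ℓ), phi (marg S g ℓ b)) / 2 := by
    rw [← Finset.sum_div, ← Finset.sum_add_distrib]
  simp only [phi] at h h4
  simp only [marg_mid]
  linarith

/-- if `P` and `P'` both maximize `Ψ_v` over `𝒟(S)`, and `Q̂` (resp. `Q̂'`)
maximizes the entropy over the distributions compatible with `P` (resp. `P'`), then
`Q̂ = Q̂'`; in particular `Ψ_v(Q̂)` does not depend on the chosen maximizer of `Ψ_v`. -/
theorem stmt19 (S : Finset (ℤ × ℤ × ℤ)) (v : ↥S → ℝ)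
    (P P' Qhat Qhat' : ↥S → ℝ)
    (hP : IsDist S P) (hP' : IsDist S P')
    (hPmax : ∀ Q : ↥S → ℝ, IsDist S Q → Psi S v Q ≤ Psi S v P)
    (hP'max : ∀ Q : ↥S → ℝ, IsDist S Q → Psi S v Q ≤ Psi S v P')
    (hQ : IsDist S Qhat) (hQcomp : Compatible S P Qhat)
    (hQmax : ∀ Q : ↥S → ℝ, IsDist S Q → Compatible S P Q → entH S Q ≤ entH S Qhat)
    (hQ' : IsDist S Qhat') (hQ'comp : Compatible S P' Qhat')
    (hQ'max : ∀ Q : ↥S → ℝ, IsDist S Q → Compatible S P' Q → entH S Q ≤ entH S Qhat') :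
    Qhat = Qhat' := by
  -- Step 1: P and P' have the same marginals.
  set M : ↥S → ℝ := fun s => (P s + P' s) / 2 with hMdef
  have hM : IsDist S M := mid_isDist hP hP'
  have hPsiEq : Psi S v P = Psi S v P' := le_antisymm (hP'max P hP) (hPmax P' hP')
  have hle : ∀ ℓ : Fin 3, (margEntH S P ℓ + margEntH S P' ℓ) / 2 ≤ margEntH S M ℓ :=
    margEntH_mid_ge hP.1 hP'.1
  have hlin : ∑ s, M s * v s = ((∑ s, P s * v s) + ∑ s, P' s * v s) / 2 := by
    rw [← Finset.sum_add_distrib, Finset.sum_div]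
    apply Finset.sum_congr rfl
    intro s _
    show (P s + P' s) / 2 * v s = (P s * v s + P' s * v s) / 2
    ring
  have hsum_le : ∑ ℓ : Fin 3, (margEntH S P ℓ + margEntH S P' ℓ) / 2
      ≤ ∑ ℓ : Fin 3, margEntH S M ℓ := Finset.sum_le_sum fun ℓ _ => hle ℓ
  have hPsiM : Psi S v M ≤ Psi S v P := hPmax M hM
  have hmargsum_eq : ∑ ℓ : Fin 3, (margEntH S P ℓ + margEntH S P' ℓ) / 2
      = ∑ ℓ : Fin 3, margEntH S M ℓ := by
    refine le_antisymm hsum_le ?_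
    have h1 : Psi S v M = (∑ ℓ : Fin 3, margEntH S M ℓ) / 3 + ∑ s, M s * v s := rfl
    have h2 : Psi S v P = (∑ ℓ : Fin 3, margEntH S P ℓ) / 3 + ∑ s, P s * v s := rfl
    have h3 : Psi S v P' = (∑ ℓ : Fin 3, margEntH S P' ℓ) / 3 + ∑ s, P' s * v s := rfl
    have h4 : ∑ ℓ : Fin 3, (margEntH S P ℓ + margEntH S P' ℓ) / 2
        = ((∑ ℓ : Fin 3, margEntH S P ℓ) + ∑ ℓ : Fin 3, margEntH S P' ℓ) / 2 := by
      rw [← Finset.sum_div, ← Finset.sum_add_distrib]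
    rw [h4]
    rw [h1, hlin] at hPsiM
    rw [h2] at hPsiM hPsiEq
    rw [h3] at hPsiEq
    linarith
  have hmargEq : ∀ ℓ : Fin 3, (margEntH S P ℓ + margEntH S P' ℓ) / 2 = margEntH S M ℓ :=
    fun ℓ => (Finset.sum_eq_sum_iff_of_le fun ℓ _ => hle ℓ).1 hmargsum_eq ℓ (Finset.mem_univ ℓ)
  have hcompPP' : Compatible S P P' := by
    intro ℓ a
    by_cases ha : a ∈ S.image (coord ℓ)
    · -- use the equality case of strict convexity
      have hkey : ∑ b ∈ S.image (coord ℓ), phi ((marg S P ℓ b + marg S P' ℓ b) / 2)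
          = ∑ b ∈ S.image (coord ℓ), (phi (marg S P ℓ b) + phi (marg S P' ℓ b)) / 2 := by
        have hmm := hmargEq ℓ
        unfold margEntH at hmm
        have hMm : ∀ b, marg S M ℓ b = (marg S P ℓ b + marg S P' ℓ b) / 2 := fun b => by
          rw [hMdef]; exact marg_mid S P P' ℓ b
        simp only [hMm] at hmm
        have h4 : ∑ b ∈ S.image (coord ℓ), (phi (marg S P ℓ b) + phi (marg S P' ℓ b)) / 2
            = ((∑ b ∈ S.image (coord ℓ), phi (marg S P ℓ b))
                + ∑ b ∈ S.image (coord ℓ), phi (marg S P' ℓ b)) / 2 := by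
          rw [← Finset.sum_div, ← Finset.sum_add_distrib]
        simp only [phi] at h4 ⊢
        linarith [hmm, h4]
      exact sum_phi_mid_eq (S.image (coord ℓ))
        (fun b _ => marg_nonneg hP.1 ℓ b) (fun b _ => marg_nonneg hP'.1 ℓ b) hkey a ha
    · -- outside the image both marginals vanish
      have hempty : Finset.univ.filter (fun s : ↥S => coord ℓ s.val = a) = ∅ := by
        rw [Finset.filter_eq_empty_iff]
        intro s _ hs
        exact ha (Finset.mem_image.2 ⟨s.val, s.2, hs⟩)
      unfold marg
      rw [hempty]; simp
  -- Step 2: both Qhat and Qhat' maximize entropy over the same compatibility class.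
  have hcompPQ' : Compatible S P Qhat' := fun ℓ a => (hcompPP' ℓ a).trans (hQ'comp ℓ a)
  have hcompP'Q : Compatible S P' Qhat := fun ℓ a => (hcompPP' ℓ a).symm.trans (hQcomp ℓ a)
  have hEnt : entH S Qhat = entH S Qhat' :=
    le_antisymm (hQ'max Qhat hQ hcompP'Q) (hQmax Qhat' hQ' hcompPQ')
  set N : ↥S → ℝ := fun s => (Qhat s + Qhat' s) / 2 with hNdef
  have hN : IsDist S N := mid_isDist hQ hQ'
  have hNcomp : Compatible S P N := by
    intro ℓ a
    have := marg_mid S Qhat Qhat' ℓ a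
    show marg S P ℓ a = marg S N ℓ a
    rw [show marg S N ℓ a = (marg S Qhat ℓ a + marg S Qhat' ℓ a) / 2 from this,
      ← hQcomp ℓ a, ← hcompPQ' ℓ a, add_self_div_two]
  have hNle : entH S N ≤ entH S Qhat := hQmax N hN hNcomp
  have hNge : ∑ s, phi (N s) ≤ ∑ s, (phi (Qhat s) + phi (Qhat' s)) / 2 :=
    sum_phi_mid_le Finset.univ (fun s _ => hQ.1 s) (fun s _ => hQ'.1 s)
  have hfinal : ∑ s, phi (N s) = ∑ s, (phi (Qhat s) + phi (Qhat' s)) / 2 := by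
    refine le_antisymm hNge ?_
    have e1 : entH S N = -∑ s, phi (N s) := rfl
    have e2 : entH S Qhat = -∑ s, phi (Qhat s) := rfl
    have e3 : entH S Qhat' = -∑ s, phi (Qhat' s) := rfl
    have h4 : ∑ s, (phi (Qhat s) + phi (Qhat' s)) / 2
        = ((∑ s, phi (Qhat s)) + ∑ s, phi (Qhat' s)) / 2 := by
      rw [← Finset.sum_div, ← Finset.sum_add_distrib]
    rw [h4]
    rw [e1] at hNle
    rw [e2] at hNle hEnt
    rw [e3] at hEnt
    linarith
  funext s
  exact sum_phi_mid_eq Finset.univ (fun t _ => hQ.1 t) (fun t _ => hQ'.1 t) hfinal s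
    (Finset.mem_univ s)
end
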